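/- arXiv:math/0212413 — 6 statements merged into one kernel-verified Lean document; each statement's English description precedes it below -/
import Mathlib

section
/- Let a_1, ..., a_d be vectors in R^d forming the columns of a matrix A. Define height(a_1,...,a_d) = min_i dist(a_i, span{a_1,...,a_{i-1},a_{i+1},...,a_d}). If A is invertible, then the operator norm of A^{-1} satisfies ‖A^{-1}‖ ≤ √d / height(a_1,...,a_d). -/
open Matrix MeasureTheory
open scoped RealInnerProductSpace ENNReal NNReal

/-- Operator norm of a matrix acting on Euclidean space. -/
noncomputable def opNorm {d : ℕ} (A : Matrix (Fin d) (Fin d) ℝ) : ℝ :=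
  ‖Matrix.toEuclideanCLM (𝕜 := ℝ) A‖

/-- Euclidean distance from the `i`-th vector to the span of the others. -/
noncomputable def colDist {d : ℕ} (a : Fin d → EuclideanSpace ℝ (Fin d)) (i : Fin d) : ℝ :=
  Metric.infDist (a i) (Submodule.span ℝ (a '' {j | j ≠ i}) : Set (EuclideanSpace ℝ (Fin d)))

/-- `height` of a tuple of vectors: minimal distance of one vector to the span of the rest. -/
noncomputable def height {d : ℕ} (a : Fin d → EuclideanSpace ℝ (Fin d)) : ℝ :=
  ⨅ i, colDist a i

theorem inv_opNorm_le_sqrt_div_height {d : ℕ} (hd : 0 < d)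
    (a : Fin d → EuclideanSpace ℝ (Fin d)) (A : Matrix (Fin d) (Fin d) ℝ)
    (hA : A = Matrix.of fun i j => a j i) (hinv : IsUnit A) :
    opNorm A⁻¹ ≤ Real.sqrt d / height a := by
  haveI : Nonempty (Fin d) := ⟨⟨0, hd⟩⟩
  set e := WithLp.linearEquiv 2 ℝ (Fin d → ℝ) with he
  -- columns linearly independent
  have hli : LinearIndependent ℝ a := by
    have h1 : LinearIndependent ℝ (fun i => Aᵀ i) :=
      Matrix.linearIndependent_cols_iff_isUnit.2 hinv
    have h2 : (fun i => Aᵀ i) = ⇑e ∘ a := by subst hA; rfl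
    rw [h2] at h1
    exact LinearIndependent.of_comp _ h1
  -- each colDist is positive
  have hpos : ∀ i, 0 < colDist a i := by
    intro i
    have hclosed : IsClosed (Submodule.span ℝ (a '' {j | j ≠ i}) :
        Set (EuclideanSpace ℝ (Fin d))) :=
      Submodule.closed_of_finiteDimensional _
    have hnm : a i ∉ (Submodule.span ℝ (a '' {j | j ≠ i}) :
        Set (EuclideanSpace ℝ (Fin d))) :=
      hli.notMem_span_image (by simp)
    exact (hclosed.notMem_iff_infDist_pos ⟨0, Submodule.zero_mem _⟩).1 hnm
  have hbdd : BddBelow (Set.range (colDist a)) :=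
    ⟨0, by rintro _ ⟨i, rfl⟩; exact Metric.infDist_nonneg⟩
  have hle : ∀ i, height a ≤ colDist a i := fun i => ciInf_le hbdd i
  have hheight : 0 < height a := by
    obtain ⟨i0, hi0⟩ := Finite.exists_min (colDist a)
    exact lt_of_lt_of_le (hpos i0) (le_ciInf hi0)
  have hdet : IsUnit A.det := A.isUnit_iff_isUnit_det.mp hinv
  rw [opNorm]
  apply ContinuousLinearMap.opNorm_le_bound _
    (div_nonneg (Real.sqrt_nonneg _) hheight.le)
  intro x
  set c : Fin d → ℝ := A⁻¹ *ᵥ (e x) with hc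
  have hAc : A *ᵥ c = e x := by
    rw [hc, Matrix.mulVec_mulVec, Matrix.mul_nonsing_inv A hdet, Matrix.one_mulVec]
  -- key bound on coefficients
  have hkey : ∀ j, |c j| ≤ ‖x‖ / height a := by
    intro j
    by_cases hcj : c j = 0
    · rw [hcj, abs_zero]
      exact div_nonneg (norm_nonneg _) hheight.le
    · set w : EuclideanSpace ℝ (Fin d) := a j - (c j)⁻¹ • x with hw
      have hmem : w ∈ Submodule.span ℝ (a '' {k | k ≠ j}) := by
        have hrepr : w = ∑ k ∈ Finset.univ.erase j, (-(c j)⁻¹ * c k) • a k := by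
          apply e.injective
          rw [map_sum]
          funext i
          rw [Finset.sum_apply]
          have hL : e w i = a j i - (c j)⁻¹ * x i := rfl
          have hR : ∀ k, e ((-(c j)⁻¹ * c k) • a k) i = -(c j)⁻¹ * c k * a k i := fun _ => rfl
          rw [hL, Finset.sum_congr rfl fun k _ => hR k]
          have hxi : x i = ∑ k, a k i * c k := by
            have h0 : x i = (A *ᵥ c) i := (congrFun hAc i).symm
            rw [h0]
            simp [Matrix.mulVec, dotProduct, hA, mul_comm]
          rw [hxi, ← Finset.add_sum_erase _ (fun k => a k i * c k) (Finset.mem_univ j),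
            mul_add, Finset.mul_sum]
          have hj4 : (c j)⁻¹ * (a j i * c j) = a j i := by field_simp
          rw [hj4, sub_add_eq_sub_sub, sub_self, zero_sub, ← Finset.sum_neg_distrib]
          exact Finset.sum_congr rfl fun k _ => by ring
        rw [hrepr]
        exact Submodule.sum_mem _ fun k hk => Submodule.smul_mem _ _
          (Submodule.subset_span ⟨k, (Finset.mem_erase.1 hk).1, rfl⟩)
      have h1 : colDist a j ≤ dist (a j) w := Metric.infDist_le_dist_of_mem hmem
      have h2 : dist (a j) w = |c j|⁻¹ * ‖x‖ := by
        rw [dist_eq_norm, hw, sub_sub_cancel, norm_smul, norm_inv, Real.norm_eq_abs]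
      have h3 : height a ≤ |c j|⁻¹ * ‖x‖ := (hle j).trans (h2 ▸ h1)
      have habs : 0 < |c j| := abs_pos.2 hcj
      rw [le_div_iff₀ hheight]
      calc |c j| * height a ≤ |c j| * (|c j|⁻¹ * ‖x‖) := by
            exact mul_le_mul_of_nonneg_left h3 habs.le
        _ = ‖x‖ := by field_simp
  -- conclude
  have hnorm : ‖(Matrix.toEuclideanCLM (𝕜 := ℝ) A⁻¹) x‖ = Real.sqrt (∑ i, ‖c i‖ ^ 2) := by
    rw [EuclideanSpace.norm_eq]
    rfl
  rw [hnorm]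
  have hsum : ∑ i, ‖c i‖ ^ 2 ≤ (d : ℝ) * (‖x‖ / height a) ^ 2 := by
    calc ∑ i, ‖c i‖ ^ 2 ≤ ∑ _i : Fin d, (‖x‖ / height a) ^ 2 :=
          Finset.sum_le_sum fun i _ => by
            have := hkey i
            rw [Real.norm_eq_abs]
            exact pow_le_pow_left₀ (abs_nonneg _) this 2
      _ = (d : ℝ) * (‖x‖ / height a) ^ 2 := by simp [Finset.sum_const, Finset.card_univ]
  calc Real.sqrt (∑ i, ‖c i‖ ^ 2) ≤ Real.sqrt ((d : ℝ) * (‖x‖ / height a) ^ 2) :=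
        Real.sqrt_le_sqrt hsum
    _ = Real.sqrt d * (‖x‖ / height a) := by
        rw [Real.sqrt_mul (Nat.cast_nonneg d), Real.sqrt_sq
          (div_nonneg (norm_nonneg _) hheight.le)]
    _ = Real.sqrt d / height a * ‖x‖ := by ring
end

section
/- Let a_1, ..., a_d be vectors in R^d forming the columns of an invertible matrix A, and let t be a unit vector achieving ‖At‖ = 1/‖A^{-1}‖. If t_1 is a coordinate of t of largest absolute value, then |t_1| ≥ 1/√d and dist(a_1, span{a_2,...,a_d}) ≤ √d / ‖A^{-1}‖. -/
/-! Since `‖t‖ = 1` and `t i` is a largest coordinate, `1 ≤ √d * |t i|`. Dividing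
`A t = ∑ j, t j • a j` by `t i` exhibits a point of the span of the other columns at distance
`‖A t‖ / |t i| = 1 / (‖A⁻¹‖ * |t i|) ≤ √d / ‖A⁻¹‖` from `a i`. -/

open Matrix MeasureTheory
open scoped RealInnerProductSpace ENNReal NNReal

theorem EuclideanSpace.norm_le_sqrt_card_mul_abs_of_forall_abs_le {ι : Type*} [Fintype ι]
    (t : EuclideanSpace ℝ ι) (i : ι) (hi : ∀ j, |t j| ≤ |t i|) :
    ‖t‖ ≤ √(Fintype.card ι) * |t i| := by
  refine ((EuclideanSpace.basisFun ι ℝ).norm_le_card_mul_iSup_norm_inner t).trans ?_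
  have : Nonempty ι := ⟨i⟩
  gcongr
  exact ciSup_le fun j => by simpa using hi j

theorem Matrix.toEuclideanCLM_of_columns {ι : Type*} [Fintype ι] [DecidableEq ι]
    (a : ι → EuclideanSpace ℝ ι) (t : EuclideanSpace ℝ ι) :
    toEuclideanCLM (𝕜 := ℝ) (of fun i j => a j i) t = ∑ j, t j • a j := by
  ext k
  simp [mulVec, dotProduct, mul_comm]

theorem infDist_span_le_norm_sum_smul_div {𝕜 E ι : Type*} [NormedField 𝕜]
    [SeminormedAddCommGroup E] [NormedSpace 𝕜 E] [Fintype ι] [DecidableEq ι]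
    (a : ι → E) (c : ι → 𝕜) {i : ι} (hi : c i ≠ 0) :
    Metric.infDist (a i) (Submodule.span 𝕜 (a '' {j | j ≠ i}) : Set E) ≤
      ‖∑ j, c j • a j‖ / ‖c i‖ := by
  set rest := ∑ j ∈ Finset.univ.erase i, c j • a j
  have hrest : (c i)⁻¹ • rest ∈ Submodule.span 𝕜 (a '' {j | j ≠ i}) :=
    Submodule.smul_mem _ _ <| Submodule.sum_mem _ fun j hj =>
      Submodule.smul_mem _ _ <| Submodule.subset_span ⟨j, Finset.ne_of_mem_erase hj, rfl⟩
  have hsplit : a i + (c i)⁻¹ • rest = (c i)⁻¹ • ∑ j, c j • a j := by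
    rw [← Finset.add_sum_erase _ _ (Finset.mem_univ i), smul_add, smul_smul, inv_mul_cancel₀ hi,
      one_smul]
  calc Metric.infDist (a i) _ ≤ dist (a i) (-((c i)⁻¹ • rest)) :=
        Metric.infDist_le_dist_of_mem (neg_mem hrest)
    _ = ‖∑ j, c j • a j‖ / ‖c i‖ := by
        rw [dist_eq_norm, sub_neg_eq_add, hsplit, norm_smul, norm_inv, inv_mul_eq_div]

theorem max_coord_and_dist_bound_general {d : ℕ}
    (a : Fin d → EuclideanSpace ℝ (Fin d)) (A : Matrix (Fin d) (Fin d) ℝ)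
    (hA : A = Matrix.of fun i j => a j i)
    (t : EuclideanSpace ℝ (Fin d)) (ht : ‖t‖ = 1)
    (hAt : ‖Matrix.toEuclideanCLM (𝕜 := ℝ) A t‖ = 1 / opNorm A⁻¹)
    (i : Fin d) (hi : ∀ j, |t j| ≤ |t i|) :
    1 / Real.sqrt d ≤ |t i| ∧ colDist a i ≤ Real.sqrt d / opNorm A⁻¹ := by
  have hbound : 1 ≤ √d * |t i| := by
    simpa [ht] using EuclideanSpace.norm_le_sqrt_card_mul_abs_of_forall_abs_le t i hi
  have hsqrt : 0 < √(d : ℝ) := Real.sqrt_pos.2 (Nat.cast_pos.2 i.pos)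
  have hti : 0 < |t i| := pos_of_mul_pos_right (one_pos.trans_le hbound) hsqrt.le
  refine ⟨(div_le_iff₀ hsqrt).2 (by linarith), ?_⟩
  calc colDist a i ≤ ‖toEuclideanCLM (𝕜 := ℝ) A t‖ / ‖t i‖ := by
        rw [colDist, hA, toEuclideanCLM_of_columns]
        exact infDist_span_le_norm_sum_smul_div a t (abs_pos.1 hti)
    _ = 1 / opNorm A⁻¹ * (1 / |t i|) := by rw [hAt, Real.norm_eq_abs]; ring
    _ ≤ 1 / opNorm A⁻¹ * √d := by
        gcongr
        · exact one_div_nonneg.2 (norm_nonneg _)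
        · exact (div_le_iff₀ hti).2 (by linarith)
    _ = √d / opNorm A⁻¹ := by ring

theorem max_coord_and_dist_bound {d : ℕ} (hd : 0 < d)
    (a : Fin d → EuclideanSpace ℝ (Fin d)) (A : Matrix (Fin d) (Fin d) ℝ)
    (hA : A = Matrix.of fun i j => a j i) (hinv : IsUnit A)
    (t : EuclideanSpace ℝ (Fin d)) (ht : ‖t‖ = 1)
    (hAt : ‖Matrix.toEuclideanCLM (𝕜 := ℝ) A t‖ = 1 / opNorm A⁻¹)
    (i : Fin d) (hi : ∀ j, |t j| ≤ |t i|) :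
    1 / Real.sqrt d ≤ |t i| ∧ colDist a i ≤ Real.sqrt d / opNorm A⁻¹ :=
  max_coord_and_dist_bound_general a A hA t ht hAt i hi
end

section
/- Let Ā be an arbitrary d-by-d real matrix and let A be a random matrix whose entries are independent Gaussians of variance σ², with entry (i,j) having mean Ā_{i,j}. Then for all x > 0, the probability that A is singular or ‖A^{-1}‖ ≥ x is at most d^{3/2}/(xσ). -/
open Matrix MeasureTheory ProbabilityTheory
open scoped NNReal ENNReal

/-!
If `A` is singular or `‖A⁻¹‖ ≥ x`, then for every `s > 1/x` some `w ≠ 0` has `‖wᵀA‖ < s‖w‖`.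
Rescaling `w` so that its largest coordinate `w i` becomes `1` shows that row `i` of `A` lies
within `√d s` of the span of the other rows. Conditionally on those rows, the projection of row
`i` onto a unit normal of their span is a real Gaussian of variance `σ²`, whose density is at
most `1 / (σ√(2π))`, so this happens with probability at most `√d s / σ`. A union bound over the
`d` rows and the limit `s ↓ 1/x` give the claim; the strict inequalities keep every event open,
hence measurable.
-/

open Real WithLp Filter Topology

lemma gaussianReal_le_ofReal_mul_volume (m : ℝ) {v : ℝ≥0} (hv : v ≠ 0) (s : Set ℝ) :
    gaussianReal m v s ≤ ENNReal.ofReal (√(2 * π * v))⁻¹ * volume s := by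
  rw [gaussianReal_apply m hv, ← setLIntegral_const]
  refine lintegral_mono fun y => ENNReal.ofReal_le_ofReal ?_
  rw [gaussianPDFReal]
  refine mul_le_of_le_one_right (by positivity) (exp_le_one_iff.2 ?_)
  exact div_nonpos_of_nonpos_of_nonneg (neg_nonpos.2 (sq_nonneg _)) (by positivity)

lemma gaussianReal_abs_lt_le (m : ℝ) {σ : ℝ≥0} (hσ : σ ≠ 0) {t : ℝ} (ht : 0 ≤ t) :
    gaussianReal m (σ ^ 2) {y | |y| < t} ≤ ENNReal.ofReal (t / σ) := by
  have hσ' : (0 : ℝ) < σ := NNReal.coe_pos.2 (pos_iff_ne_zero.2 hσ)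
  have hsqrt : √(2 * π * (σ ^ 2 : ℝ≥0)) = √(2 * π) * σ := by
    rw [NNReal.coe_pow, sqrt_mul (by positivity), sqrt_sq σ.coe_nonneg]
  have h2 : 2 ≤ √(2 * π) := le_sqrt_of_sq_le (by nlinarith [pi_gt_three])
  have hset : {y : ℝ | |y| < t} = Set.Ioo (-t) t := by ext; simp [abs_lt]
  calc gaussianReal m (σ ^ 2) {y | |y| < t}
      ≤ ENNReal.ofReal (√(2 * π * (σ ^ 2 : ℝ≥0)))⁻¹ * ENNReal.ofReal (t - -t) := by
        rw [← Real.volume_Ioo, ← hset]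
        exact gaussianReal_le_ofReal_mul_volume m (pow_ne_zero 2 hσ) _
    _ = ENNReal.ofReal (2 * t / (√(2 * π) * σ)) := by
        rw [← ENNReal.ofReal_mul (by positivity), hsqrt]; ring_nf
    _ ≤ ENNReal.ofReal (t / σ) := by
        refine ENNReal.ofReal_le_ofReal ?_
        rw [div_le_div_iff₀ (by positivity) hσ']
        nlinarith [mul_nonneg ht hσ'.le]

instance isGaussian_pi_gaussianReal {ι : Type*} [Fintype ι] (m : ι → ℝ) (v : ι → ℝ≥0) :
    IsGaussian (Measure.pi fun k => gaussianReal (m k) (v k)) := by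
  have h := iIndepFun.hasGaussianLaw (X := fun k (r : ι → ℝ) => r k)
    (P := Measure.pi fun k => gaussianReal (m k) (v k))
    (fun k => (measurePreserving_eval (fun k => gaussianReal (m k) (v k)) k).hasLaw.hasGaussianLaw)
    (iIndepFun_pi (X := fun _ => id) fun _ => aemeasurable_id)
  simpa using h.isGaussian_map

lemma variance_pi_gaussianReal_weightedSum {ι : Type*} [Fintype ι] (m : ι → ℝ) (v : ι → ℝ≥0)
    (u : ι → ℝ) :
    Var[fun r => ∑ k, u k * r k; Measure.pi fun k => gaussianReal (m k) (v k)] =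
      ∑ k, u k ^ 2 * v k := by
  have h := variance_sum_pi (μ := fun k => gaussianReal (m k) (v k)) (X := fun k y => u k * y)
    fun k => (memLp_id_gaussianReal 2).const_mul (u k)
  simp only [variance_const_mul _ (fun y : ℝ => y), variance_fun_id_gaussianReal] at h
  convert h using 2
  ext r; simp

lemma map_pi_gaussianReal_weightedSum {ι : Type*} [Fintype ι] (m : ι → ℝ) (v : ι → ℝ≥0)
    (u : ι → ℝ) :
    ∃ c, (Measure.pi fun k => gaussianReal (m k) (v k)).map (fun r => ∑ k, u k * r k) =
      gaussianReal c (∑ k, u k ^ 2 * (v k : ℝ)).toNNReal := by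
  set L : StrongDual ℝ (ι → ℝ) := ∑ k, u k • ContinuousLinearMap.proj k
  have hL : ⇑L = fun r => ∑ k, u k * r k := by ext r; simp [L]
  rw [← variance_pi_gaussianReal_weightedSum, ← hL]
  exact ⟨_, IsGaussian.map_eq_gaussianReal L⟩

lemma pi_gaussianReal_preimage_thickening_le {ι : Type*} [Fintype ι] (m : ι → ℝ) {σ : ℝ≥0}
    (hσ : σ ≠ 0) {V : Submodule ℝ (EuclideanSpace ℝ ι)} (hV : V ≠ ⊤) {t : ℝ} (ht : 0 ≤ t) :
    (Measure.pi fun k => gaussianReal (m k) (σ ^ 2))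
      ((toLp 2 : (ι → ℝ) → EuclideanSpace ℝ ι) ⁻¹' Metric.thickening t (V : Set _)) ≤
      ENNReal.ofReal (t / σ) := by
  obtain ⟨u, huV, hu⟩ : ∃ u ∈ Vᗮ, ‖u‖ = 1 := by
    obtain ⟨u, huV, hu0⟩ := (Submodule.ne_bot_iff _).1 (mt Submodule.orthogonal_eq_bot_iff.1 hV)
    exact ⟨‖u‖⁻¹ • u, Vᗮ.smul_mem _ huV, norm_smul_inv_norm hu0⟩
  have hinner (r : ι → ℝ) : inner ℝ u (toLp 2 r) = ∑ k, u k * r k := by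
    simp [PiLp.inner_apply, mul_comm]
  have hsub : (toLp 2 : (ι → ℝ) → EuclideanSpace ℝ ι) ⁻¹' Metric.thickening t (V : Set _) ⊆
      (fun r => ∑ k, u k * r k) ⁻¹' {y | |y| < t} := by
    intro r hr
    obtain ⟨z, hzV, hz⟩ := Metric.mem_thickening_iff.1 hr
    have : inner ℝ u (toLp 2 r) = inner ℝ u (toLp 2 r - z) := by
      rw [inner_sub_right, Submodule.inner_left_of_mem_orthogonal hzV huV, sub_zero]
    simp only [Set.mem_preimage, Set.mem_ofPred_eq, ← hinner, this]
    calc |inner ℝ u (toLp 2 r - z)| ≤ ‖u‖ * ‖toLp 2 r - z‖ := abs_real_inner_le_norm _ _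
      _ < t := by rwa [hu, one_mul, ← dist_eq_norm]
  obtain ⟨c, hc⟩ := map_pi_gaussianReal_weightedSum m (fun _ => σ ^ 2) u
  have hvar : (∑ k, u k ^ 2 * ((σ ^ 2 : ℝ≥0) : ℝ)).toNNReal = σ ^ 2 := by
    rw [← Finset.sum_mul, ← EuclideanSpace.real_norm_sq_eq, hu, one_pow, one_mul,
      Real.toNNReal_coe]
  refine (measure_mono hsub).trans ?_
  rw [← Measure.map_apply (by fun_prop) (measurableSet_lt (by fun_prop) measurable_const), hc, hvar]
  exact gaussianReal_abs_lt_le c hσ ht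

lemma MeasureTheory.Measure.prod_apply_le_of_forall_slice_le {α β : Type*} [MeasurableSpace α]
    [MeasurableSpace β] {μ : Measure α} {ν : Measure β} [SFinite μ] [IsProbabilityMeasure ν]
    {S : Set (α × β)} (hS : MeasurableSet S) {ε : ℝ≥0∞}
    (h : ∀ y, μ ((·, y) ⁻¹' S) ≤ ε) : μ.prod ν S ≤ ε := by
  rw [Measure.prod_apply_symm hS]
  exact (lintegral_mono h).trans (by simp)

lemma EuclideanSpace.norm_toLp_le_sqrt_card_mul {ι : Type*} [Fintype ι] (w : ι → ℝ) :
    ‖toLp 2 w‖ ≤ √(Fintype.card ι) * ‖w‖ := by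
  rw [EuclideanSpace.norm_eq, ← sqrt_sq (norm_nonneg w), ← sqrt_mul (Nat.cast_nonneg _)]
  refine sqrt_le_sqrt ?_
  calc ∑ k, ‖w k‖ ^ 2 ≤ ∑ _k : ι, ‖w‖ ^ 2 := by
        gcongr with k; exact norm_le_pi_norm w k
    _ = _ := by simp

lemma isOpen_exists_norm_add_sum_smul_lt (d n : ℕ) (t : ℝ) :
    IsOpen {p : (Fin d → ℝ) × (Fin n → Fin d → ℝ) |
      ∃ c : Fin n → ℝ, ‖toLp 2 (p.1 + ∑ j, c j • p.2 j)‖ < t} := by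
  simp only [Set.ofPred_exists]
  exact isOpen_iUnion fun c => isOpen_lt (by fun_prop) continuous_const

section

variable {d : ℕ}

/-- Row `i` of `A` lies within distance `t` of the span of the other rows. -/
def rowNearSpan (i : Fin d) (t : ℝ) : Set (Fin d → Fin d → ℝ) :=
  {A | ∃ c : Fin d → ℝ, c i = 1 ∧ ‖toLp 2 (∑ k, c k • A k)‖ < t}

lemma pi_pi_gaussianReal_rowNearSpan_le (M : Matrix (Fin d) (Fin d) ℝ) {σ : ℝ≥0} (hσ : σ ≠ 0)
    (i : Fin d) {t : ℝ} (ht : 0 ≤ t) :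
    (Measure.pi fun i => Measure.pi fun j => gaussianReal (M i j) (σ ^ 2)) (rowNearSpan i t) ≤
      ENNReal.ofReal (t / σ) := by
  obtain ⟨n, rfl⟩ : ∃ n, d = n + 1 := ⟨d - 1, by have := i.pos; omega⟩
  set S := {p : (Fin (n + 1) → ℝ) × (Fin n → Fin (n + 1) → ℝ) |
      ∃ c : Fin n → ℝ, ‖toLp 2 (p.1 + ∑ j, c j • p.2 j)‖ < t}
  have hsub : rowNearSpan i t ⊆
      MeasurableEquiv.piFinSuccAbove (fun _ => Fin (n + 1) → ℝ) i ⁻¹' S := by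
    rintro A ⟨c, hci, hc⟩
    refine ⟨fun j => c (i.succAbove j), ?_⟩
    simpa [Fin.sum_univ_succAbove _ i, hci, Fin.removeNth] using hc
  refine (measure_mono hsub).trans ?_
  have (k : Fin (n + 1)) : SigmaFinite (Measure.pi fun j => gaussianReal (M k j) (σ ^ 2)) :=
    inferInstance
  rw [(measurePreserving_piFinSuccAbove _ i).measure_preimage
    (isOpen_exists_norm_add_sum_smul_lt _ _ t).measurableSet.nullMeasurableSet]
  refine Measure.prod_apply_le_of_forall_slice_le
    (isOpen_exists_norm_add_sum_smul_lt _ _ t).measurableSet fun B => ?_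
  set V := Submodule.span ℝ (Set.range fun j => toLp 2 (B j))
  have hV : V ≠ ⊤ := by
    intro h
    have : Module.finrank ℝ V ≤ Fintype.card (Fin n) :=
      finrank_range_le_card (R := ℝ) fun j => toLp 2 (B j)
    rw [h, finrank_top, finrank_euclideanSpace_fin, Fintype.card_fin] at this
    omega
  refine (measure_mono ?_).trans (pi_gaussianReal_preimage_thickening_le (M i) hσ hV ht)
  rintro r ⟨c, hc⟩
  refine Metric.mem_thickening_iff.2 ⟨-∑ j, c j • toLp 2 (B j), ?_, ?_⟩
  · exact V.neg_mem (V.sum_mem fun j _ => V.smul_mem _ (Submodule.subset_span ⟨j, rfl⟩))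
  · simpa [dist_eq_norm] using hc

lemma exists_ne_zero_norm_vecMul_lt {A : Matrix (Fin d) (Fin d) ℝ} {x s : ℝ} (hx : 0 < x)
    (hs : x⁻¹ < s) (hA : ¬IsUnit A ∨ x ≤ opNorm A⁻¹) :
    ∃ w ≠ 0, ‖toLp 2 (w ᵥ* A)‖ < s * ‖toLp 2 w‖ := by
  have hs0 : 0 < s := (inv_pos.2 hx).trans hs
  by_cases hU : IsUnit A
  · set T := toEuclideanCLM (𝕜 := ℝ) (A⁻¹)ᵀ
    have hT : x ≤ ‖T‖ := by
      refine (hA.resolve_left (not_not.2 hU)).trans_eq ?_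
      rw [opNorm, ← cstar_norm_def, ← cstar_norm_def, ← conjTranspose_eq_transpose_of_trivial,
        l2_opNorm_conjTranspose]
    obtain ⟨v, hv1, hv⟩ :=
      T.exists_lt_apply_of_lt_opNorm (((inv_lt_comm₀ hx hs0).1 hs).trans_le hT)
    have hTv : ofLp (T v) ᵥ* A = ofLp v := by
      rw [← mulVec_transpose, ofLp_toEuclideanCLM, mulVec_mulVec, ← transpose_mul,
        nonsing_inv_mul _ ((isUnit_iff_isUnit_det A).1 hU), transpose_one, one_mulVec]
    refine ⟨ofLp (T v), fun h => ?_, ?_⟩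
    · rw [WithLp.ofLp_eq_zero] at h
      rw [h, norm_zero] at hv
      exact lt_asymm (inv_pos.2 hs0) hv
    · rw [hTv, toLp_ofLp, toLp_ofLp]
      calc ‖v‖ < 1 := hv1
        _ = s * s⁻¹ := (mul_inv_cancel₀ hs0.ne').symm
        _ < s * ‖T v‖ := mul_lt_mul_of_pos_left hv hs0
  · have hdet : A.det = 0 := by rwa [isUnit_iff_isUnit_det, isUnit_iff_ne_zero, not_not] at hU
    obtain ⟨w, hw0, hw⟩ := exists_vecMul_eq_zero_iff.2 hdet
    refine ⟨w, hw0, ?_⟩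
    rw [hw, toLp_zero, norm_zero]
    exact mul_pos hs0 (norm_pos_iff.2 (by simpa using hw0))

lemma exists_rowNearSpan_of_norm_vecMul_lt {A : Fin d → Fin d → ℝ} {w : Fin d → ℝ} (hw : w ≠ 0)
    {s : ℝ} (h : ‖toLp 2 (w ᵥ* Matrix.of A)‖ < s * ‖toLp 2 w‖) :
    ∃ i, A ∈ rowNearSpan i (√d * s) := by
  have : Nonempty (Fin d) := by
    by_contra hd
    exact hw (funext fun k => (hd ⟨k⟩).elim)
  obtain ⟨i, hi⟩ := Finite.exists_max fun k => |w k|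
  have hwi : 0 < |w i| := by
    by_contra h0
    exact hw (funext fun k => abs_nonpos_iff.1 ((hi k).trans (not_lt.1 h0)))
  refine ⟨i, (w i)⁻¹ • w, inv_mul_cancel₀ (abs_pos.1 hwi), ?_⟩
  have hsum : ∑ k, ((w i)⁻¹ • w) k • A k = (w i)⁻¹ • (w ᵥ* Matrix.of A) := by
    simp only [Pi.smul_apply, smul_eq_mul, vecMul_eq_sum, Finset.smul_sum, smul_smul]
    rfl
  have hnorm : ‖toLp 2 w‖ ≤ √d * |w i| := by
    refine (EuclideanSpace.norm_toLp_le_sqrt_card_mul w).trans ?_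
    rw [Fintype.card_fin]
    exact mul_le_mul_of_nonneg_left ((pi_norm_le_iff_of_nonneg hwi.le).2 hi) (sqrt_nonneg _)
  rw [hsum, toLp_smul, norm_smul, norm_inv, norm_eq_abs]
  calc |w i|⁻¹ * ‖toLp 2 (w ᵥ* Matrix.of A)‖ < |w i|⁻¹ * (s * (√d * |w i|)) := by
        gcongr
        have hs : 0 ≤ s := (pos_of_mul_pos_left ((norm_nonneg _).trans_lt h) (norm_nonneg _)).le
        exact h.trans_le (mul_le_mul_of_nonneg_left hnorm hs)
    _ = √d * s := by field_simp

lemma setOf_not_isUnit_or_le_opNorm_inv_subset {x s : ℝ} (hx : 0 < x) (hs : x⁻¹ < s) :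
    {A : Fin d → Fin d → ℝ | ¬ IsUnit (Matrix.of A) ∨ x ≤ opNorm (Matrix.of A)⁻¹} ⊆
      ⋃ i, rowNearSpan i (√d * s) := fun _ hA =>
  have ⟨_, hw0, hw⟩ := exists_ne_zero_norm_vecMul_lt hx hs hA
  Set.mem_iUnion.2 (exists_rowNearSpan_of_norm_vecMul_lt hw0 hw)

lemma pi_pi_gaussianReal_iUnion_rowNearSpan_le (M : Matrix (Fin d) (Fin d) ℝ) {σ : ℝ≥0}
    (hσ : σ ≠ 0) {t : ℝ} (ht : 0 ≤ t) :
    (Measure.pi fun i => Measure.pi fun j => gaussianReal (M i j) (σ ^ 2))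
      (⋃ i, rowNearSpan i t) ≤ ENNReal.ofReal (d * t / σ) :=
  calc _ ≤ ∑ i, _ := measure_iUnion_fintype_le _ _
    _ ≤ ∑ _i : Fin d, ENNReal.ofReal (t / σ) :=
        Finset.sum_le_sum fun i _ => pi_pi_gaussianReal_rowNearSpan_le M hσ i ht
    _ = ENNReal.ofReal (d * t / σ) := by
        rw [Finset.sum_const, Finset.card_univ, Fintype.card_fin, nsmul_eq_mul,
          ← ENNReal.ofReal_natCast, ← ENNReal.ofReal_mul (Nat.cast_nonneg _), mul_div_assoc]

end

lemma ENNReal.le_ofReal_mul_of_forall_gt {a : ℝ≥0∞} {c y : ℝ}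
    (h : ∀ s > y, a ≤ ENNReal.ofReal (c * s)) : a ≤ ENNReal.ofReal (c * y) := by
  have hlim : Tendsto (fun s => ENNReal.ofReal (c * s)) (𝓝[>] y) (𝓝 (ENNReal.ofReal (c * y))) :=
    ((ENNReal.continuous_ofReal.comp (continuous_const_mul c)).tendsto y).mono_left
      nhdsWithin_le_nhds
  exact ge_of_tendsto hlim (eventually_nhdsWithin_of_forall h)

/-- Smoothed bound on the norm of the inverse (Theorem 4.3 of the paper). -/
theorem smoothed_inverse_norm {d : ℕ} (Abar : Matrix (Fin d) (Fin d) ℝ)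
    (σ : ℝ≥0) (hσ : 0 < σ) (x : ℝ) (hx : 0 < x) :
    (Measure.pi fun i : Fin d => Measure.pi fun j : Fin d =>
        gaussianReal (Abar i j) (σ ^ 2))
      {A : Fin d → Fin d → ℝ |
        ¬ IsUnit (Matrix.of A) ∨ x ≤ opNorm (Matrix.of A)⁻¹} ≤
      ENNReal.ofReal ((d : ℝ) ^ ((3 : ℝ) / 2) / (x * σ)) := by
  have hd : (d : ℝ) ^ ((3 : ℝ) / 2) / (x * σ) = d * √d / σ * x⁻¹ := by
    rw [show (3 : ℝ) / 2 = 1 + 1 / 2 by norm_num, rpow_add' (Nat.cast_nonneg _) (by norm_num),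
      rpow_one, ← sqrt_eq_rpow]
    ring
  rw [hd]
  refine ENNReal.le_ofReal_mul_of_forall_gt fun s hs => ?_
  have ht : 0 ≤ √d * s := mul_nonneg (sqrt_nonneg _) ((inv_pos.2 hx).trans hs).le
  calc _ ≤ _ := measure_mono (setOf_not_isUnit_or_le_opNorm_inv_subset hx hs)
    _ ≤ ENNReal.ofReal (d * (√d * s) / σ) := pi_pi_gaussianReal_iUnion_rowNearSpan_le Abar hσ.ne' ht
    _ = ENNReal.ofReal (d * √d / σ * s) := by ring_nf
end

section
/- Let a_1, ..., a_n be nonzero vectors in R^d and suppose x* ∈ R^d satisfies ⟨a_i, x*⟩ > 0 for all i. Define ν = min_i ⟨a_i, x*⟩/(‖a_i‖·‖x*‖) > 0. Then the perceptron algorithm—starting from x = 0 and repeatedly replacing x by x + a_i/‖a_i‖ for some i with ⟨a_i, x⟩ ≤ 0—terminates after at most 1/ν² update steps. -/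
open scoped RealInnerProductSpace

/-- Block–Novikoff: any run of the perceptron algorithm makes at most `1/ν²` updates. -/
theorem perceptron_terminates {d n : ℕ} (hn : 0 < n)
    (a : Fin n → EuclideanSpace ℝ (Fin d)) (ha : ∀ i, a i ≠ 0)
    (xstar : EuclideanSpace ℝ (Fin d)) (hxstar : xstar ≠ 0)
    (hfeas : ∀ i, 0 < ⟪a i, xstar⟫)
    (ν : ℝ) (hν : ν = ⨅ i, ⟪a i, xstar⟫ / (‖a i‖ * ‖xstar‖))
    (K : ℕ) (x : ℕ → EuclideanSpace ℝ (Fin d)) (idx : ℕ → Fin n)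
    (hx0 : x 0 = 0)
    (hupd : ∀ k < K, ⟪a (idx k), x k⟫ ≤ 0 ∧
      x (k + 1) = x k + ‖a (idx k)‖⁻¹ • a (idx k)) :
    (K : ℝ) ≤ 1 / ν ^ 2 := by
  haveI : Nonempty (Fin n) := ⟨⟨0, hn⟩⟩
  set f : Fin n → ℝ := fun i => ⟪a i, xstar⟫ / (‖a i‖ * ‖xstar‖) with hf
  have hxs : 0 < ‖xstar‖ := norm_pos_iff.mpr hxstar
  have hfpos : ∀ i, 0 < f i := fun i =>
    div_pos (hfeas i) (mul_pos (norm_pos_iff.mpr (ha i)) hxs)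
  obtain ⟨i₀, hi₀⟩ := Finite.exists_min f
  have hν_pos : 0 < ν := by
    rw [hν]
    exact lt_of_lt_of_le (hfpos i₀) (le_ciInf hi₀)
  have hν_le : ∀ i, ν ≤ f i := by
    intro i
    rw [hν]
    exact ciInf_le (Finite.bddBelow_range f) i
  -- lower bound for the inner product
  have key1 : ∀ k ≤ K, (k : ℝ) * (ν * ‖xstar‖) ≤ ⟪x k, xstar⟫ := by
    intro k hk
    induction k with
    | zero => simp [hx0]
    | succ k ih =>
      have hkK : k < K := lt_of_lt_of_le (Nat.lt_succ_self k) hk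
      obtain ⟨hneg, hstep⟩ := hupd k hkK
      have ih' := ih (le_of_lt hkK)
      have hai : (0:ℝ) < ‖a (idx k)‖ := norm_pos_iff.mpr (ha (idx k))
      have hge : ν * ‖xstar‖ ≤ ‖a (idx k)‖⁻¹ * ⟪a (idx k), xstar⟫ := by
        have := hν_le (idx k)
        rw [hf] at this
        rw [le_div_iff₀ (mul_pos hai hxs)] at this
        rw [inv_mul_eq_div, le_div_iff₀ hai]
        nlinarith
      rw [hstep]
      rw [inner_add_left, real_inner_smul_left]
      push_cast
      nlinarith
  -- upper bound for the norm
  have key2 : ∀ k ≤ K, ‖x k‖ ^ 2 ≤ (k : ℝ) := by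
    intro k hk
    induction k with
    | zero => simp [hx0]
    | succ k ih =>
      have hkK : k < K := lt_of_lt_of_le (Nat.lt_succ_self k) hk
      obtain ⟨hneg, hstep⟩ := hupd k hkK
      have ih' := ih (le_of_lt hkK)
      have hai : (0:ℝ) < ‖a (idx k)‖ := norm_pos_iff.mpr (ha (idx k))
      have hnorm : ‖‖a (idx k)‖⁻¹ • a (idx k)‖ = 1 := by
        rw [norm_smul, norm_inv, norm_norm, inv_mul_cancel₀ (ne_of_gt hai)]
      have hinner : ⟪x k, ‖a (idx k)‖⁻¹ • a (idx k)⟫ ≤ 0 := by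
        rw [real_inner_smul_right]
        have : ⟪x k, a (idx k)⟫ ≤ 0 := by
          rw [real_inner_comm]; exact hneg
        exact mul_nonpos_of_nonneg_of_nonpos (le_of_lt (inv_pos.mpr hai)) this
      have expand : ‖x (k+1)‖ ^ 2 = ‖x k‖ ^ 2 +
          2 * ⟪x k, ‖a (idx k)‖⁻¹ • a (idx k)⟫ + ‖‖a (idx k)‖⁻¹ • a (idx k)‖ ^ 2 := by
        rw [hstep, ← real_inner_self_eq_norm_sq, ← real_inner_self_eq_norm_sq,
          ← real_inner_self_eq_norm_sq, inner_add_add_self,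
          real_inner_comm (‖a (idx k)‖⁻¹ • a (idx k)) (x k)]
        ring
      rw [expand, hnorm]
      push_cast
      nlinarith
  -- combine
  have hK1 := key1 K le_rfl
  have hK2 := key2 K le_rfl
  have hcs : ⟪x K, xstar⟫ ≤ ‖x K‖ * ‖xstar‖ := real_inner_le_norm _ _
  have hKν : (K : ℝ) * ν ≤ ‖x K‖ := by
    have h := le_trans hK1 hcs
    rw [mul_comm ν ‖xstar‖, ← mul_assoc] at h
    exact le_of_mul_le_mul_right (by linarith [h]) hxs
  have hKnn : (0:ℝ) ≤ (K : ℝ) * ν := mul_nonneg (Nat.cast_nonneg K) (le_of_lt hν_pos)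
  have hsq : ((K : ℝ) * ν) ^ 2 ≤ (K : ℝ) := by
    calc ((K : ℝ) * ν) ^ 2 ≤ ‖x K‖ ^ 2 := by nlinarith [norm_nonneg (x K)]
      _ ≤ (K : ℝ) := hK2
  rcases Nat.eq_zero_or_pos K with hK0 | hKpos
  · subst hK0; simp; positivity
  · have hKr : (0:ℝ) < K := Nat.cast_pos.mpr hKpos
    rw [le_div_iff₀ (by positivity)]
    nlinarith
end

section
/- In the perceptron setting with margin ν as above, after k update steps the iterate x_k satisfies ⟨x_k, x*/‖x*‖⟩ ≥ kν and ‖x_k‖² ≤ k; consequently k ≤ 1/ν². -/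
open scoped RealInnerProductSpace

/-- Perceptron progress invariants: after `k` updates, `⟪x_k, x*/‖x*‖⟫ ≥ kν` and
`‖x_k‖² ≤ k`; consequently `k ≤ 1/ν²`. -/
theorem perceptron_invariants {d n : ℕ}
    (a : Fin n → EuclideanSpace ℝ (Fin d)) (ha : ∀ i, a i ≠ 0)
    (xstar : EuclideanSpace ℝ (Fin d)) (hxstar : xstar ≠ 0)
    (ν : ℝ) (hν : 0 < ν)
    (hmargin : ∀ i, ν * (‖a i‖ * ‖xstar‖) ≤ ⟪a i, xstar⟫)
    (k : ℕ) (x : ℕ → EuclideanSpace ℝ (Fin d)) (idx : ℕ → Fin n)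
    (hx0 : x 0 = 0)
    (hupd : ∀ j < k, ⟪a (idx j), x j⟫ ≤ 0 ∧
      x (j + 1) = x j + ‖a (idx j)‖⁻¹ • a (idx j)) :
    (k : ℝ) * ν ≤ ⟪x k, ‖xstar‖⁻¹ • xstar⟫ ∧ ‖x k‖ ^ 2 ≤ (k : ℝ) ∧
      (k : ℝ) ≤ 1 / ν ^ 2 := by
  have hxs : (0:ℝ) < ‖xstar‖ := norm_pos_iff.mpr hxstar
  have main : ∀ m, m ≤ k → (m : ℝ) * ν ≤ ⟪x m, ‖xstar‖⁻¹ • xstar⟫ ∧ ‖x m‖ ^ 2 ≤ (m : ℝ) := by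
    intro m hm
    induction m with
    | zero => simp [hx0]
    | succ j ih =>
      obtain ⟨h1, h2⟩ := ih (le_of_lt (Nat.lt_of_succ_le hm))
      obtain ⟨hneg, heq⟩ := hupd j (Nat.lt_of_succ_le hm)
      have hai : (0:ℝ) < ‖a (idx j)‖ := norm_pos_iff.mpr (ha _)
      have hstep : ν ≤ ⟪‖a (idx j)‖⁻¹ • a (idx j), ‖xstar‖⁻¹ • xstar⟫ := by
        rw [real_inner_smul_left, real_inner_smul_right]
        have hm' := hmargin (idx j)
        rw [← sub_nonneg]
        have key : ‖a (idx j)‖⁻¹ * (‖xstar‖⁻¹ * ⟪a (idx j), xstar⟫) - ν =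
            (⟪a (idx j), xstar⟫ - ν * (‖a (idx j)‖ * ‖xstar‖)) * (‖a (idx j)‖⁻¹ * ‖xstar‖⁻¹) := by
          field_simp
        rw [key]
        exact mul_nonneg (sub_nonneg.mpr hm') (by positivity)
      constructor
      · rw [heq, inner_add_left]
        push_cast
        calc ((j : ℝ) + 1) * ν = (j : ℝ) * ν + ν := by ring
          _ ≤ _ := add_le_add h1 hstep
      · rw [heq, norm_add_sq_real]
        have hu : ‖‖a (idx j)‖⁻¹ • a (idx j)‖ = 1 := by
          rw [norm_smul]; simp [abs_of_pos hai, inv_mul_cancel₀ hai.ne']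
        have hin : ⟪x j, ‖a (idx j)‖⁻¹ • a (idx j)⟫ ≤ 0 := by
          rw [real_inner_smul_right, real_inner_comm]
          exact mul_nonpos_of_nonneg_of_nonpos (by positivity) hneg
        rw [hu]
        push_cast
        nlinarith
  obtain ⟨h1, h2⟩ := main k le_rfl
  refine ⟨h1, h2, ?_⟩
  have hcs : ⟪x k, ‖xstar‖⁻¹ • xstar⟫ ≤ ‖x k‖ := by
    calc ⟪x k, ‖xstar‖⁻¹ • xstar⟫ ≤ ‖x k‖ * ‖‖xstar‖⁻¹ • xstar‖ := real_inner_le_norm _ _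
      _ = ‖x k‖ := by
        rw [norm_smul]; simp [abs_of_pos hxs, inv_mul_cancel₀ hxs.ne']
  have hk : (k : ℝ) * ν ≤ ‖x k‖ := h1.trans hcs
  have hsq : ((k : ℝ) * ν) ^ 2 ≤ (k : ℝ) := by
    nlinarith [mul_le_mul hk hk (by positivity : (0:ℝ) ≤ (k:ℝ)*ν) (norm_nonneg (x k))]
  rcases Nat.eq_zero_or_pos k with hk0 | hk0
  · subst hk0; simp; positivity
  · have hkpos : (0:ℝ) < k := by exact_mod_cast hk0
    rw [le_div_iff₀ (by positivity)]
    nlinarith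
end

section
/- For any invertible d-by-d real matrix A, there exists a singular matrix B with ‖A − B‖ = 1/‖A^{-1}‖; therefore the operator-norm distance from A to the set of singular matrices equals exactly 1/‖A^{-1}‖. -/
open Matrix MeasureTheory
open scoped RealInnerProductSpace ENNReal NNReal

/-!
If `S` is a left inverse of `T` and `B x = 0` with `x ≠ 0`, then
`‖x‖ = ‖S ((T - B) x)‖ ≤ ‖S‖ ‖T - B‖ ‖x‖`, so `‖T - B‖ ≥ ‖S‖⁻¹`. Conversely, if `‖S y‖ = ‖S‖` for a
unit vector `y`, the rank-one map `R` sending `S y` to `y` with `‖R‖ = 1 / ‖S y‖` (built from a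
Hahn–Banach functional norming `S y`) makes `B = T - R` kill `S y`, and `‖T - B‖ = ‖R‖ = ‖S‖⁻¹`.
In finite dimension the norm of `S` is attained, so the bound is sharp.
-/

namespace ContinuousLinearMap

section NontriviallyNormed

variable {𝕜 E F : Type*} [NontriviallyNormedField 𝕜] [NormedAddCommGroup E] [NormedSpace 𝕜 E]
  [NormedAddCommGroup F] [NormedSpace 𝕜 F]

theorem inv_opNorm_le_opNorm_sub_of_apply_eq_zero {T B : E →L[𝕜] F} {S : F →L[𝕜] E}
    (hST : ∀ x, S (T x) = x) {x : E} (hx : x ≠ 0) (hBx : B x = 0) :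
    ‖S‖⁻¹ ≤ ‖T - B‖ := by
  have hx' : 0 < ‖x‖ := norm_pos_iff.mpr hx
  have hone : 1 ≤ ‖T - B‖ * ‖S‖ := by
    refine le_of_mul_le_mul_right ?_ hx'
    calc 1 * ‖x‖ = ‖S ((T - B) x)‖ := by simp [hBx, hST]
      _ ≤ ‖S‖ * ‖(T - B) x‖ := S.le_opNorm _
      _ ≤ ‖S‖ * (‖T - B‖ * ‖x‖) := by gcongr; exact (T - B).le_opNorm x
      _ = ‖T - B‖ * ‖S‖ * ‖x‖ := by ring
  have hS : 0 < ‖S‖ := (norm_nonneg S).lt_of_ne fun h => by norm_num [← h] at hone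
  exact (inv_le_iff_one_le_mul₀ hS).mpr hone

end NontriviallyNormed

section RCLike

variable {𝕜 E F : Type*} [RCLike 𝕜] [NormedAddCommGroup E] [NormedSpace 𝕜 E]
  [NormedAddCommGroup F] [NormedSpace 𝕜 F]

theorem exists_apply_eq_opNorm_eq_div {x : E} (hx : x ≠ 0) (y : F) :
    ∃ R : E →L[𝕜] F, R x = y ∧ ‖R‖ = ‖y‖ / ‖x‖ := by
  obtain ⟨g, hg, hgx⟩ := exists_dual_vector 𝕜 x (norm_ne_zero_iff.mpr hx)
  have hx' : (‖x‖ : 𝕜) ≠ 0 := by simpa using hx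
  refine ⟨((‖x‖ : 𝕜)⁻¹ • g).smulRight y, ?_, ?_⟩
  · simp [hgx, inv_mul_cancel₀ hx']
  · rw [norm_smulRight_apply, norm_smul, hg, norm_inv, RCLike.norm_ofReal, abs_norm]
    ring

theorem exists_norm_eq_one_norm_apply_eq_opNorm [ProperSpace E] [Nontrivial E]
    (S : E →L[𝕜] F) : ∃ y : E, ‖y‖ = 1 ∧ ‖S y‖ = ‖S‖ := by
  obtain ⟨y, hy, hSy⟩ := ((isCompact_sphere (0 : E) 1).image S.continuous.norm).sSup_mem
    ((Set.nonempty_coe_sort.mp (NormedSpace.sphere_nonempty_rclike 𝕜 zero_le_one)).image _)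
  rw [S.sSup_sphere_eq_norm] at hSy
  exact ⟨y, mem_sphere_zero_iff_norm.mp hy, hSy⟩

theorem exists_apply_eq_zero_opNorm_sub_eq [ProperSpace F] [Nontrivial F]
    (T : E →L[𝕜] F) (S : F →L[𝕜] E) (hTS : ∀ y, T (S y) = y) :
    ∃ B : E →L[𝕜] F, (∃ x ≠ 0, B x = 0) ∧ ‖T - B‖ = ‖S‖⁻¹ := by
  obtain ⟨y, hy, hSy⟩ := S.exists_norm_eq_one_norm_apply_eq_opNorm (𝕜 := 𝕜)
  have hy0 : y ≠ 0 := norm_ne_zero_iff.mp (by rw [hy]; exact one_ne_zero)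
  have hSy0 : S y ≠ 0 := fun h => hy0 (by rw [← hTS y, h, map_zero])
  obtain ⟨R, hRy, hR⟩ := exists_apply_eq_opNorm_eq_div (𝕜 := 𝕜) hSy0 y
  refine ⟨T - R, ⟨S y, hSy0, by simp [hTS, hRy]⟩, ?_⟩
  rw [sub_sub_cancel, hR, hy, hSy, one_div]

end RCLike

end ContinuousLinearMap

theorem Matrix.exists_mulVec_eq_zero_iff_toEuclideanCLM {𝕜 n : Type*} [RCLike 𝕜] [Fintype n]
    [DecidableEq n] (B : Matrix n n 𝕜) :
    (∃ v : n → 𝕜, v ≠ 0 ∧ B *ᵥ v = 0) ↔ ∃ x ≠ 0, toEuclideanCLM (𝕜 := 𝕜) B x = 0 := by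
  constructor
  · rintro ⟨v, hv, hBv⟩
    exact ⟨WithLp.toLp 2 v, by simpa using hv, by simp [hBv]⟩
  · rintro ⟨x, hx, hBx⟩
    refine ⟨WithLp.ofLp x, by simpa using hx, ?_⟩
    rw [← ofLp_toEuclideanCLM, hBx, WithLp.ofLp_zero]

theorem Matrix.toEuclideanCLM_nonsing_inv_apply_apply {𝕜 n : Type*} [RCLike 𝕜] [Fintype n]
    [DecidableEq n] {A : Matrix n n 𝕜} (hA : IsUnit A) (x : EuclideanSpace 𝕜 n) :
    toEuclideanCLM (𝕜 := 𝕜) A⁻¹ (toEuclideanCLM (𝕜 := 𝕜) A x) = x := by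
  rw [← mul_apply_eq_comp, ← map_mul,
    nonsing_inv_mul A ((isUnit_iff_isUnit_det A).mp hA), map_one, one_apply_eq_self]

theorem Matrix.toEuclideanCLM_apply_nonsing_inv_apply {𝕜 n : Type*} [RCLike 𝕜] [Fintype n]
    [DecidableEq n] {A : Matrix n n 𝕜} (hA : IsUnit A) (x : EuclideanSpace 𝕜 n) :
    toEuclideanCLM (𝕜 := 𝕜) A (toEuclideanCLM (𝕜 := 𝕜) A⁻¹ x) = x := by
  rw [← mul_apply_eq_comp, ← map_mul,
    mul_nonsing_inv A ((isUnit_iff_isUnit_det A).mp hA), map_one, one_apply_eq_self]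

theorem one_div_opNorm_inv_le_opNorm_sub {d : ℕ} {A B : Matrix (Fin d) (Fin d) ℝ}
    (hA : IsUnit A) (hB : ∃ v : Fin d → ℝ, v ≠ 0 ∧ B *ᵥ v = 0) :
    1 / opNorm A⁻¹ ≤ opNorm (A - B) := by
  obtain ⟨x, hx, hBx⟩ := B.exists_mulVec_eq_zero_iff_toEuclideanCLM.mp hB
  rw [one_div, opNorm, opNorm, map_sub]
  exact ContinuousLinearMap.inv_opNorm_le_opNorm_sub_of_apply_eq_zero
    (toEuclideanCLM_nonsing_inv_apply_apply hA) hx hBx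

theorem exists_singular_opNorm_sub_eq {d : ℕ} (hd : 0 < d) {A : Matrix (Fin d) (Fin d) ℝ}
    (hA : IsUnit A) :
    ∃ B : Matrix (Fin d) (Fin d) ℝ, (∃ v : Fin d → ℝ, v ≠ 0 ∧ B *ᵥ v = 0) ∧
      opNorm (A - B) = 1 / opNorm A⁻¹ := by
  have : Nonempty (Fin d) := Fin.pos_iff_nonempty.mp hd
  obtain ⟨B, hB, hAB⟩ := ContinuousLinearMap.exists_apply_eq_zero_opNorm_sub_eq
    (toEuclideanCLM (𝕜 := ℝ) A) _ (toEuclideanCLM_apply_nonsing_inv_apply hA)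
  refine ⟨(toEuclideanCLM (𝕜 := ℝ) (n := Fin d)).symm B,
    (exists_mulVec_eq_zero_iff_toEuclideanCLM _).mpr (by simpa using hB), ?_⟩
  rw [opNorm, map_sub, StarAlgEquiv.apply_symm_apply, hAB, one_div, opNorm]

theorem dist_to_singular_eq {d : ℕ} (hd : 0 < d) (A : Matrix (Fin d) (Fin d) ℝ)
    (hA : IsUnit A) :
    (∃ B : Matrix (Fin d) (Fin d) ℝ, (∃ v : Fin d → ℝ, v ≠ 0 ∧ B *ᵥ v = 0) ∧
        opNorm (A - B) = 1 / opNorm A⁻¹) ∧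
      sInf {r : ℝ | ∃ B : Matrix (Fin d) (Fin d) ℝ,
          (∃ v : Fin d → ℝ, v ≠ 0 ∧ B *ᵥ v = 0) ∧ r = opNorm (A - B)} =
        1 / opNorm A⁻¹ := by
  obtain ⟨B, hB, hAB⟩ := exists_singular_opNorm_sub_eq hd hA
  refine ⟨⟨B, hB, hAB⟩, IsLeast.csInf_eq ⟨⟨B, hB, hAB.symm⟩, ?_⟩⟩
  rintro r ⟨B', hB', rfl⟩
  exact one_div_opNorm_inv_le_opNorm_sub hA hB'
end
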